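/- Let E be a real Hilbert space, f : ℝ → E twice continuously differentiable, t ∈ ℝ and τ > 0. Then ‖(f(t+τ) + f(t))/2 − f(t + τ/2)‖² ≤ τ³ · ∫_t^{t+τ} ‖f''(s)‖² ds. -/

import Mathlib

/-!
For `c ∈ [a, b]` the map `u ↦ f u + (c - u) • f' u` has derivative `(c - u) • f'' u`, so its
increment over `[a, b]` is at most `(b - a) ∫ₐᵇ ‖f''‖`. Anchoring at `c = t + τ` on the right half
and `c = t` on the left half, the two increments add up to `f (t + τ) + f t - 2 f (t + τ/2)`,
so the averaging error is at most `τ/4 ∫ ‖f''‖`; Cauchy–Schwarz turns this into the `L²` bound.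
-/

open MeasureTheory Set

section

variable {E : Type*} [NormedAddCommGroup E] [NormedSpace ℝ E]

theorem norm_sub_le_integral_norm_deriv
    {g : ℝ → E} {a b : ℝ} (hg : ContDiff ℝ 1 g) (hab : a ≤ b) :
    ‖g b - g a‖ ≤ ∫ x in a..b, ‖deriv g x‖ := by
  have hint : IntegrableOn (deriv g) (Icc a b) :=
    (hg.continuous_deriv le_rfl).integrableOn_Icc
  rw [intervalIntegral.integral_of_le hab, ← integral_Icc_eq_integral_Ioc,
    ← ENNReal.ofReal_le_ofReal_iff (by positivity), ofReal_norm,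
    ofReal_integral_norm_eq_lintegral_enorm hint]
  exact enorm_sub_le_lintegral_deriv_of_contDiffOn_Icc hg.contDiffOn hab

theorem hasDerivAt_add_sub_smul_deriv
    {f : ℝ → E} (hf : ContDiff ℝ 2 f) (c x : ℝ) :
    HasDerivAt (fun u ↦ f u + (c - u) • deriv f u) ((c - x) • iteratedDeriv 2 f x) x := by
  have hf' : HasDerivAt f (deriv f x) x := (hf.differentiable (by norm_num) x).hasDerivAt
  have hf'' : HasDerivAt (deriv f) (iteratedDeriv 2 f x) x := by
    rw [iteratedDeriv_succ, iteratedDeriv_one]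
    exact ((ContDiff.deriv' (n := 1) hf).differentiable one_ne_zero x).hasDerivAt
  exact (hf'.add (((hasDerivAt_id' x).const_sub c).smul hf'')).congr_deriv (by module)

theorem norm_add_smul_deriv_sub_le
    {f : ℝ → E} (hf : ContDiff ℝ 2 f) {a b c : ℝ} (hab : a ≤ b) (hc : c ∈ Icc a b) :
    ‖(f b + (c - b) • deriv f b) - (f a + (c - a) • deriv f a)‖ ≤
      (b - a) * ∫ x in a..b, ‖iteratedDeriv 2 f x‖ := by
  have hf2 : Continuous (iteratedDeriv 2 f) := hf.continuous_iteratedDeriv 2 le_rfl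
  have hg : ContDiff ℝ 1 fun u ↦ f u + (c - u) • deriv f u := by
    have := ContDiff.deriv' (n := 1) hf
    have h1 : ContDiff ℝ 1 f := hf.of_le (by norm_num)
    fun_prop
  have hderiv : deriv (fun u ↦ f u + (c - u) • deriv f u) =
      fun x ↦ (c - x) • iteratedDeriv 2 f x :=
    funext fun x ↦ (hasDerivAt_add_sub_smul_deriv hf c x).deriv
  calc _ ≤ ∫ x in a..b, ‖(c - x) • iteratedDeriv 2 f x‖ := by
        simpa only [hderiv] using norm_sub_le_integral_norm_deriv hg hab
    _ ≤ ∫ x in a..b, (b - a) * ‖iteratedDeriv 2 f x‖ := by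
        refine intervalIntegral.integral_mono_on hab
          ((by fun_prop : Continuous _).intervalIntegrable _ _)
          ((by fun_prop : Continuous _).intervalIntegrable _ _) fun x hx ↦ ?_
        rw [norm_smul, Real.norm_eq_abs]
        gcongr
        exact abs_sub_le_iff.2 ⟨by linarith [hc.2, hx.1], by linarith [hc.1, hx.2]⟩
    _ = (b - a) * ∫ x in a..b, ‖iteratedDeriv 2 f x‖ := intervalIntegral.integral_const_mul _ _

theorem norm_midpoint_average_sub_le
    {f : ℝ → E} (hf : ContDiff ℝ 2 f) {t τ : ℝ} (hτ : 0 ≤ τ) :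
    ‖(2:ℝ)⁻¹ • (f (t + τ) + f t) - f (t + τ/2)‖ ≤
      τ / 4 * ∫ s in t..(t + τ), ‖iteratedDeriv 2 f s‖ := by
  set m := t + τ / 2 with hm
  have htm : t ≤ m := by linarith
  have hmb : m ≤ t + τ := by linarith
  have hleft := norm_add_smul_deriv_sub_le hf htm ⟨le_rfl, htm⟩
  have hright := norm_add_smul_deriv_sub_le hf hmb ⟨hmb, le_rfl⟩
  have hsplit := intervalIntegral.integral_add_adjacent_intervals (a := t) (b := m) (c := t + τ)
    (μ := volume) (f := fun s ↦ ‖iteratedDeriv 2 f s‖)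
    ((hf.continuous_iteratedDeriv 2 le_rfl).norm.intervalIntegrable _ _)
    ((hf.continuous_iteratedDeriv 2 le_rfl).norm.intervalIntegrable _ _)
  rw [show m - t = τ / 2 by ring, sub_self, zero_smul, add_zero] at hleft
  rw [show t + τ - m = τ / 2 by ring, sub_self, zero_smul, add_zero] at hright
  have hid : (2:ℝ)⁻¹ • (f (t + τ) + f t) - f m = (2:ℝ)⁻¹ •
      ((f (t + τ) - (f m + (τ / 2) • deriv f m)) - ((f m + (t - m) • deriv f m) - f t)) := by
    rw [show t - m = -(τ / 2) by ring]; module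
  rw [hid, norm_smul, Real.norm_of_nonneg (by norm_num), ← hsplit]
  linarith [norm_sub_le (f (t + τ) - (f m + (τ / 2) • deriv f m))
    ((f m + (t - m) • deriv f m) - f t)]

end

theorem sq_intervalIntegral_le_mul_intervalIntegral_sq {g : ℝ → ℝ} {a b : ℝ} (hab : a ≤ b)
    (hg : IntervalIntegrable g volume a b) (hg2 : IntervalIntegrable (fun x ↦ g x ^ 2) volume a b) :
    (∫ x in a..b, g x) ^ 2 ≤ (b - a) * ∫ x in a..b, g x ^ 2 := by
  set I := ∫ x in a..b, g x
  set J := ∫ x in a..b, g x ^ 2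
  rcases hab.eq_or_lt with rfl | hlt
  · simp [I]
  have hL : 0 < b - a := sub_pos.2 hlt
  have hexpand : ∫ x in a..b, ((b - a) * g x - I) ^ 2 = (b - a) * ((b - a) * J - I ^ 2) := by
    calc ∫ x in a..b, ((b - a) * g x - I) ^ 2
        = ∫ x in a..b, ((b - a) ^ 2 * g x ^ 2 - 2 * (b - a) * I * g x + I ^ 2) := by
          congr 1; ext x; ring
      _ = (b - a) ^ 2 * J - 2 * (b - a) * I * I + (b - a) * I ^ 2 := by
          rw [intervalIntegral.integral_add ((hg2.const_mul _).sub (hg.const_mul _))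
            intervalIntegrable_const, intervalIntegral.integral_sub (hg2.const_mul _)
            (hg.const_mul _), intervalIntegral.integral_const_mul,
            intervalIntegral.integral_const_mul, intervalIntegral.integral_const, smul_eq_mul]
      _ = (b - a) * ((b - a) * J - I ^ 2) := by ring
  have hnonneg : 0 ≤ ∫ x in a..b, ((b - a) * g x - I) ^ 2 :=
    intervalIntegral.integral_nonneg hab fun x _ ↦ sq_nonneg _
  rw [hexpand] at hnonneg
  nlinarith [(mul_nonneg_iff_of_pos_left hL).1 hnonneg]

theorem crank_nicolson_midpoint_average_truncation_error_general
    {E : Type*} [NormedAddCommGroup E] [InnerProductSpace ℝ E]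
    (f : ℝ → E) (hf : ContDiff ℝ 2 f) (t τ : ℝ) (hτ : 0 < τ) :
    ‖(2:ℝ)⁻¹ • (f (t + τ) + f t) - f (t + τ/2)‖^2 ≤
      τ^3 * ∫ s in t..(t + τ), ‖iteratedDeriv 2 f s‖^2 := by
  have hd2 : Continuous fun s ↦ ‖iteratedDeriv 2 f s‖ :=
    (hf.continuous_iteratedDeriv 2 le_rfl).norm
  have htτ : t ≤ t + τ := by linarith
  have hcs := sq_intervalIntegral_le_mul_intervalIntegral_sq htτ (hd2.intervalIntegrable _ _)
    ((hd2.pow 2).intervalIntegrable _ _)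
  rw [add_sub_cancel_left] at hcs
  have hJ : 0 ≤ ∫ s in t..(t + τ), ‖iteratedDeriv 2 f s‖ ^ 2 :=
    intervalIntegral.integral_nonneg htτ fun _ _ ↦ sq_nonneg _
  calc _ ≤ (τ / 4 * ∫ s in t..(t + τ), ‖iteratedDeriv 2 f s‖) ^ 2 :=
        pow_le_pow_left₀ (norm_nonneg _) (norm_midpoint_average_sub_le hf hτ.le) 2
    _ = τ ^ 2 / 16 * (∫ s in t..(t + τ), ‖iteratedDeriv 2 f s‖) ^ 2 := by ring
    _ ≤ τ ^ 2 / 16 * (τ * ∫ s in t..(t + τ), ‖iteratedDeriv 2 f s‖ ^ 2) := by gcongr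
    _ ≤ τ ^ 3 * ∫ s in t..(t + τ), ‖iteratedDeriv 2 f s‖ ^ 2 := by nlinarith

/-- Truncation error bound for the Crank–Nicolson midpoint average, for a
Hilbert-space-valued function. -/
theorem crank_nicolson_midpoint_average_truncation_error
    {E : Type*} [NormedAddCommGroup E] [InnerProductSpace ℝ E] [CompleteSpace E]
    (f : ℝ → E) (hf : ContDiff ℝ 2 f) (t τ : ℝ) (hτ : 0 < τ) :
    ‖(2:ℝ)⁻¹ • (f (t + τ) + f t) - f (t + τ/2)‖^2 ≤
      τ^3 * ∫ s in t..(t + τ), ‖iteratedDeriv 2 f s‖^2 :=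
  crank_nicolson_midpoint_average_truncation_error_general f hf t τ hτ
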